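/- arXiv:1912.05055 — 6 statements merged into one kernel-verified Lean document; each statement's English description precedes it below -/
import Mathlib

section
/- Let G₁, …, Gₙ be groups in which every abelian subgroup is finitely generated, and for each i let Aᵢ be a highest abelian subgroup of Gᵢ. Then the product A₁ × … × Aₙ is a highest abelian subgroup of G₁ × … × Gₙ. -/
open scoped TensorProduct

/-- The torsion-free rank of a subgroup `A`, i.e. the dimension of the
`ℚ`-vector space `A ⊗_ℤ ℚ` (for abelian `A`, computed via the abelianization,
which is isomorphic to `A` in that case). -/
noncomputable def subgroupRank {G : Type*} [Group G] (A : Subgroup G) : Cardinal :=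
  Module.rank ℚ (ℚ ⊗[ℤ] Additive (Abelianization A))

/-- An abelian subgroup `A ≤ G` is highest if no finite-index subgroup of `A`
is contained in an abelian subgroup of `G` of strictly greater rank. -/
def IsHighestAbelian {G : Type*} [Group G] (A : Subgroup G) : Prop :=
  IsMulCommutative A ∧
    ∀ B C : Subgroup G, B ≤ A → B.relIndex A ≠ 0 → IsMulCommutative C → B ≤ C →
      ¬ subgroupRank A < subgroupRank C

/-- `G` has the Abelian intersection property (AIP) if there exist finitely many
highest abelian subgroups of `G` whose intersection is the trivial subgroup. -/
def HasAIP (G : Type*) [Group G] : Prop :=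
  ∃ (k : ℕ) (A : Fin k → Subgroup G),
    (∀ i, IsHighestAbelian (A i)) ∧ (⨅ i, A i) = ⊥

open scoped IsMulCommutative

/-! A finite-index subgroup `B` of `∏ Aᵢ` projects to finite-index subgroups `Bᵢ` of the `Aᵢ`,
and an abelian `C ⊇ B` embeds into the product of its projections `Cᵢ ⊇ Bᵢ`, which are abelian.
Since `ℚ ⊗_ℤ -` is exact (`ℚ` is flat over `ℤ`) and commutes with finite products,
`rank C ≤ ∑ rank Cᵢ ≤ ∑ rank Aᵢ = rank ∏ Aᵢ`, the middle step because each `Aᵢ` is highest. -/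

universe u

noncomputable def torsionFreeRank (M : Type u) [AddCommGroup M] : Cardinal.{u} :=
  Module.rank ℚ (ℚ ⊗[ℤ] M)

section TorsionFreeRank

variable {M N : Type u} [AddCommGroup M] [AddCommGroup N]

theorem torsionFreeRank_le_of_injective (f : M →+ N) (hf : Function.Injective f) :
    torsionFreeRank M ≤ torsionFreeRank N :=
  LinearMap.rank_le_of_injective (f.toIntLinearMap.baseChange ℚ) <|
    Module.Flat.lTensor_preserves_injective_linearMap (M := ℚ) f.toIntLinearMap hf

theorem torsionFreeRank_congr (e : M ≃+ N) : torsionFreeRank M = torsionFreeRank N :=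
  (e.toIntLinearEquiv.baseChange ℤ ℚ M N).rank_eq

theorem torsionFreeRank_pi {ι : Type*} [Fintype ι] (M : ι → Type u) [∀ i, AddCommGroup (M i)] :
    torsionFreeRank (∀ i, M i) = Cardinal.sum fun i => torsionFreeRank (M i) := by
  classical
  exact ((TensorProduct.piRight ℤ ℚ ℚ M).rank_eq).trans rank_pi

end TorsionFreeRank

theorem subgroupRank_eq_torsionFreeRank {G : Type u} [Group G] (H : Subgroup G)
    [IsMulCommutative H] : subgroupRank H = torsionFreeRank (Additive H) :=
  (torsionFreeRank_congr (MulEquiv.toAdditive (Abelianization.equivOfComm (H := H)))).symm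

namespace Subgroup

theorem relIndex_map_ne_zero {G G' : Type*} [Group G] [Group G'] (f : G →* G')
    {B K : Subgroup G} (h : B.relIndex K ≠ 0) :
    (B.map f).relIndex (K.map f) ≠ 0 := by
  rw [← relIndex_comap]
  exact mt (relIndex_eq_zero_of_le_left (le_comap_map f B)) h

variable {ι : Type*} {G : ι → Type*} [∀ i, Group (G i)]

def piUnivEquiv (A : ∀ i, Subgroup (G i)) : pi Set.univ A ≃* ∀ i, A i where
  toFun x i := ⟨x.1 i, x.2 i (Set.mem_univ i)⟩
  invFun y := ⟨fun i => y i, fun i _ => (y i).2⟩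
  map_mul' _ _ := rfl

instance isMulCommutative_pi (A : ∀ i, Subgroup (G i)) [∀ i, IsMulCommutative (A i)] :
    IsMulCommutative (pi Set.univ A) :=
  ⟨⟨fun x y => (piUnivEquiv A).injective <| by simp only [map_mul, mul_comm]⟩⟩

theorem map_evalMonoidHom_pi_univ (A : ∀ i, Subgroup (G i)) (i : ι) :
    (pi Set.univ A).map (Pi.evalMonoidHom G i) = A i := by
  classical
  refine le_antisymm (map_le_iff_le_comap.mpr (le_pi_iff.mp le_rfl i (Set.mem_univ i))) ?_
  intro x hx
  exact ⟨Pi.mulSingle i x, (mulSingle_mem_pi i x).mpr fun _ => hx, Pi.mulSingle_eq_same i x⟩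

end Subgroup

section Pi

variable {ι : Type*} [Fintype ι] {G : ι → Type u} [∀ i, Group (G i)]

theorem subgroupRank_pi (A : ∀ i, Subgroup (G i)) [∀ i, IsMulCommutative (A i)] :
    subgroupRank (Subgroup.pi Set.univ A) = Cardinal.sum fun i => subgroupRank (A i) := by
  simp only [subgroupRank_eq_torsionFreeRank]
  rw [torsionFreeRank_congr
      ((Subgroup.piUnivEquiv A).toAdditive.trans (AddEquiv.piAdditive _)), torsionFreeRank_pi]

theorem subgroupRank_le_sum_map_evalMonoidHom (C : Subgroup (∀ i, G i)) [IsMulCommutative C] :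
    subgroupRank C ≤ Cardinal.sum fun i => subgroupRank (C.map (Pi.evalMonoidHom G i)) := by
  let φ : C →* ∀ i, C.map (Pi.evalMonoidHom G i) :=
    MonoidHom.pi fun i => (Pi.evalMonoidHom G i).subgroupMap C
  have hφ : Function.Injective φ := fun x y h =>
    Subtype.ext <| funext fun i => congrArg Subtype.val (congrFun h i)
  simp only [subgroupRank_eq_torsionFreeRank, ← torsionFreeRank_pi]
  exact torsionFreeRank_le_of_injective
    ((AddEquiv.piAdditive _).toAddMonoidHom.comp φ.toAdditive)
    ((AddEquiv.piAdditive _).injective.comp hφ)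

end Pi

theorem isHighestAbelian_pi_general {n : ℕ} (G : Fin n → Type*) [∀ i, Group (G i)]
    (A : ∀ i, Subgroup (G i)) (hA : ∀ i, IsHighestAbelian (A i)) :
    IsHighestAbelian (Subgroup.pi Set.univ A) := by
  have := fun i => (hA i).1
  refine ⟨inferInstance, fun B C hBA hB hC hBC hlt => hlt.not_ge ?_⟩
  have hBA_i (i : Fin n) : B.map (Pi.evalMonoidHom G i) ≤ A i :=
    Subgroup.map_evalMonoidHom_pi_univ A i ▸ Subgroup.map_mono hBA
  have hB_i (i : Fin n) : (B.map (Pi.evalMonoidHom G i)).relIndex (A i) ≠ 0 :=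
    Subgroup.map_evalMonoidHom_pi_univ A i ▸ Subgroup.relIndex_map_ne_zero _ hB
  calc subgroupRank C
      ≤ Cardinal.sum fun i => subgroupRank (C.map (Pi.evalMonoidHom G i)) :=
        subgroupRank_le_sum_map_evalMonoidHom C
    _ ≤ Cardinal.sum fun i => subgroupRank (A i) := Cardinal.sum_le_sum _ _ fun i =>
        not_lt.mp <| (hA i).2 _ _ (hBA_i i) (hB_i i) inferInstance (Subgroup.map_mono hBC)
    _ = subgroupRank (Subgroup.pi Set.univ A) := (subgroupRank_pi A).symm

/-- If each `Aᵢ` is a highest abelian subgroup of `Gᵢ` (all abelian subgroups of the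
`Gᵢ` being finitely generated), then `A₁ × … × Aₙ` is a highest abelian subgroup
of `G₁ × … × Gₙ`. -/
theorem isHighestAbelian_pi {n : ℕ} (G : Fin n → Type*) [∀ i, Group (G i)]
    (hab : ∀ i, ∀ A : Subgroup (G i), IsMulCommutative A → A.FG)
    (A : ∀ i, Subgroup (G i)) (hA : ∀ i, IsHighestAbelian (A i)) :
    IsHighestAbelian (Subgroup.pi Set.univ A) :=
  isHighestAbelian_pi_general G A hA
end

section
/- Let G₁, …, Gₙ be groups in which every abelian subgroup is finitely generated, let G = G₁ × … × Gₙ, and let pᵢ : G → Gᵢ denote the i-th projection. If A is a highest abelian subgroup of G, then for every i the image pᵢ(A) is a highest abelian subgroup of Gᵢ. -/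
open scoped TensorProduct

/-!
Let `p` be the projection to the `i`-th factor. Given `B ≤ p(A)` of finite index and an
abelian `C ≥ B`, the subgroup `A' = p⁻¹(B) ∩ A` has finite index in `A` and commutes with the
copy of `C` in the `i`-th factor, so `C' = A' ⊔ C` is abelian. Rank is additive along `p`:
`rk D = rk p(D) + rk (ker p ∩ D)`. Since `ker p ∩ A' ≤ ker p ∩ C'`, and `rk (ker p ∩ C')` is
finite because abelian subgroups of the factors are finitely generated, `rk p(A) < rk C ≤ rk p(C')`
would give `rk A = rk A' < rk C'`, contradicting that `A` is highest.
-/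

open scoped IsMulCommutative
open Cardinal Function

universe u

section CommGroup

variable {H K : Type u} [CommGroup H] [CommGroup K]

theorem rank_additive_le_of_injective (f : H →* K) (hf : Injective f) :
    Module.rank ℤ (Additive H) ≤ Module.rank ℤ (Additive K) :=
  LinearMap.rank_le_of_injective (MonoidHom.toAdditive f).toIntLinearMap hf

theorem rank_additive_congr (e : H ≃* K) :
    Module.rank ℤ (Additive H) = Module.rank ℤ (Additive K) :=
  (MulEquiv.toAdditive e).toIntLinearEquiv.rank_eq

theorem rank_additive_eq_of_surjective (f : H →* K) (hf : Surjective f) :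
    Module.rank ℤ (Additive H) =
      Module.rank ℤ (Additive K) + Module.rank ℤ (Additive f.ker) := by
  let F := (MonoidHom.toAdditive f).toIntLinearMap
  let e : LinearMap.ker F ≃+ Additive f.ker :=
    { toFun := fun x => .ofMul ⟨x.1.toMul, x.2⟩
      invFun := fun y => ⟨.ofMul y.toMul.1, y.toMul.2⟩
      left_inv := fun _ => rfl
      right_inv := fun _ => rfl
      map_add' := fun _ _ => rfl }
  rw [LinearMap.rank_eq_of_surjective (f := F) hf, e.toIntLinearEquiv.rank_eq]

theorem rank_additive_eq_zero_of_finite [Finite H] : Module.rank ℤ (Additive H) = 0 :=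
  rank_eq_zero_iff.mpr fun x =>
    ⟨Nat.card (Additive H), Nat.cast_ne_zero.mpr Nat.card_pos.ne', by simp⟩

theorem rank_additive_lt_aleph0 [Group.FG H] : Module.rank ℤ (Additive H) < ℵ₀ :=
  have : Module.Finite ℤ (Additive H) := Module.Finite.iff_addGroup_fg.mpr inferInstance
  Module.rank_lt_aleph0 ℤ _

end CommGroup

theorem Subgroup.isMulCommutative_of_le {G : Type*} [Group G] {A B : Subgroup G}
    [IsMulCommutative B] (h : A ≤ B) : IsMulCommutative A :=
  .of_setLike_mul_comm fun _ ha _ hb => setLike_mul_comm (h ha) (h hb)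

section SubgroupRank

open Subgroup

variable {G G' : Type u} [Group G] [Group G']

theorem subgroupRank_eq_rank (A : Subgroup G) [IsMulCommutative A] :
    subgroupRank A = Module.rank ℤ (Additive A) := by
  rw [subgroupRank, (TensorProduct.isBaseChange ℤ _ ℚ).rank_eq]
  exact rank_additive_congr Abelianization.equivOfComm.symm

theorem subgroupRank_mono {A B : Subgroup G} [IsMulCommutative B] (h : A ≤ B) :
    subgroupRank A ≤ subgroupRank B := by
  have := isMulCommutative_of_le h
  rw [subgroupRank_eq_rank, subgroupRank_eq_rank]
  exact rank_additive_le_of_injective (inclusion h) (inclusion_injective h)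

theorem subgroupRank_eq_of_relIndex_ne_zero {A B : Subgroup G} [IsMulCommutative A] (h : B ≤ A)
    (hB : B.relIndex A ≠ 0) : subgroupRank B = subgroupRank A := by
  have := isMulCommutative_of_le h
  have : (B.subgroupOf A).FiniteIndex := ⟨hB⟩
  have key := rank_additive_eq_of_surjective _ (QuotientGroup.mk'_surjective (B.subgroupOf A))
  rw [rank_additive_eq_zero_of_finite (H := A ⧸ B.subgroupOf A), zero_add,
    QuotientGroup.ker_mk'] at key
  rw [subgroupRank_eq_rank, subgroupRank_eq_rank, key]
  exact rank_additive_congr (subgroupOfEquivOfLe h).symm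

theorem subgroupRank_eq_add_inf_ker (f : G →* G') (D : Subgroup G) [IsMulCommutative D] :
    subgroupRank D = subgroupRank (D.map f) + subgroupRank (f.ker ⊓ D) := by
  have := isMulCommutative_of_le (inf_le_right : f.ker ⊓ D ≤ D)
  rw [subgroupRank_eq_rank, subgroupRank_eq_rank, subgroupRank_eq_rank,
    rank_additive_eq_of_surjective _ (f.subgroupMap_surjective D)]
  congr 1
  refine rank_additive_congr ((MulEquiv.subgroupCongr ?_).trans (subgroupOfEquivOfLe inf_le_right))
  rw [ker_subgroupMap, inf_subgroupOf_right]

theorem subgroupRank_lt_aleph0_of_fg (A : Subgroup G) [IsMulCommutative A] (hA : A.FG) :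
    subgroupRank A < ℵ₀ := by
  have : Group.FG A := (Group.fg_iff_subgroup_fg A).mpr hA
  rw [subgroupRank_eq_rank]
  exact rank_additive_lt_aleph0

theorem subgroupRank_lt_aleph0_of_forall_map_eval_fg {ι : Type*} [Finite ι] {G : ι → Type u}
    [∀ i, Group (G i)] (D : Subgroup (∀ i, G i)) [IsMulCommutative D]
    (hD : ∀ i, (D.map (Pi.evalMonoidHom G i)).FG) : subgroupRank D < ℵ₀ := by
  let P := pi Set.univ fun i => D.map (Pi.evalMonoidHom G i)
  have : IsMulCommutative P :=
    .of_setLike_mul_comm fun _ hx _ hy => funext fun i => setLike_mul_comm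
      ((mem_pi _).mp hx i trivial) ((mem_pi _).mp hy i trivial)
  calc subgroupRank D ≤ subgroupRank P := subgroupRank_mono fun x hx i _ => ⟨x, hx, rfl⟩
    _ < ℵ₀ := subgroupRank_lt_aleph0_of_fg P (FG.pi hD)

end SubgroupRank

theorem isMulCommutative_sup_map_mulSingle {ι : Type*} [DecidableEq ι] {G : ι → Type*}
    [∀ i, Group (G i)] {i : ι} {D : Subgroup (∀ i, G i)} {C : Subgroup (G i)}
    [IsMulCommutative D] [IsMulCommutative C] (h : D.map (Pi.evalMonoidHom G i) ≤ C) :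
    IsMulCommutative ↥(D ⊔ C.map (MonoidHom.mulSingle G i)) := by
  have key : ∀ x ∈ D, ∀ c ∈ C, x * Pi.mulSingle i c = Pi.mulSingle i c * x := by
    intro x hx c hc
    funext j
    rcases eq_or_ne j i with rfl | hj
    · simpa using setLike_mul_comm (h ⟨x, hx, rfl⟩) hc
    · simp [Pi.mulSingle_eq_of_ne hj]
  rw [Subgroup.sup_eq_closure]
  refine Subgroup.isMulCommutative_closure ?_
  rintro x (hx | ⟨c, hc, rfl⟩) y (hy | ⟨d, hd, rfl⟩)
  · exact setLike_mul_comm hx hy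
  · exact key x hx d hd
  · exact (key y hy c hc).symm
  · exact setLike_mul_comm (Subgroup.mem_map_of_mem _ hc) (Subgroup.mem_map_of_mem _ hd)

open Subgroup in
/-- If `A` is a highest abelian subgroup of `G = G₁ × … × Gₙ` (all abelian subgroups of
the `Gᵢ` being finitely generated), then each projection `pᵢ(A)` is a highest abelian
subgroup of `Gᵢ`. -/
theorem isHighestAbelian_map_eval {n : ℕ} (G : Fin n → Type*) [∀ i, Group (G i)]
    (hab : ∀ i, ∀ A : Subgroup (G i), IsMulCommutative A → A.FG)
    (A : Subgroup (∀ i, G i)) (hA : IsHighestAbelian A) (i : Fin n) :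
    IsHighestAbelian (A.map (Pi.evalMonoidHom G i)) := by
  obtain ⟨hAc, hAmax⟩ := hA
  set p := Pi.evalMonoidHom G i
  refine ⟨inferInstance, fun B C _ hBi hC hBC hlt => ?_⟩
  set A' := B.comap p ⊓ A
  have hA'A : A' ≤ A := inf_le_right
  have hA'i : A'.relIndex A ≠ 0 := by rwa [inf_relIndex_right, relIndex_comap]
  have := isMulCommutative_of_le hA'A
  have hA'C : A'.map p ≤ C := (map_mono inf_le_left).trans ((map_comap_le _ _).trans hBC)
  set C' := A' ⊔ C.map (MonoidHom.mulSingle G i)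
  have hC' := isMulCommutative_sup_map_mulSingle hA'C
  have hCC' : C ≤ C'.map p := fun c hc =>
    ⟨Pi.mulSingle i c, mem_sup_right ⟨c, hc, rfl⟩, Pi.mulSingle_eq_same i c⟩
  have := isMulCommutative_of_le (inf_le_right : p.ker ⊓ C' ≤ C')
  have hker : subgroupRank (p.ker ⊓ C') < ℵ₀ :=
    subgroupRank_lt_aleph0_of_forall_map_eval_fg _ fun j => hab j _ inferInstance
  refine hAmax A' C' hA'A hA'i hC' le_sup_left ?_
  rw [← subgroupRank_eq_of_relIndex_ne_zero hA'A hA'i, subgroupRank_eq_add_inf_ker p A',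
    subgroupRank_eq_add_inf_ker p C']
  have h1 : subgroupRank (p.ker ⊓ A') ≤ subgroupRank (p.ker ⊓ C') :=
    subgroupRank_mono (inf_le_inf_left _ le_sup_left)
  have h2 : subgroupRank (A'.map p) < subgroupRank (C'.map p) :=
    ((subgroupRank_mono (map_mono hA'A)).trans_lt hlt).trans_le (subgroupRank_mono hCC')
  exact (add_le_add le_rfl h1).trans_lt ((add_lt_add_iff_of_right_lt_aleph0 hker).mpr h2)
end

section
/- Let G be a group, let g be an element of the center of G of infinite order, and let A₁, …, A_k be finitely many highest abelian subgroups of G, each finitely generated. Then some power gⁿ with n ≥ 1 lies in the intersection A₁ ∩ … ∩ A_k; in particular this intersection is nontrivial. -/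
open scoped TensorProduct

open scoped IsMulCommutative

/-!
If no positive power of the central element `g` lay in a highest abelian subgroup `A`, then
`A ∩ ⟨g⟩` would be trivial, so, `g` being central of infinite order, `A ⊔ ⟨g⟩ ≅ A × ℤ` would
be abelian of rank `rank A + 1`. Since `A` is finitely generated this rank is finite, hence
strictly larger, contradicting highestness (take `B = A`). A common multiple of the exponents
found for `A₁, …, A_k` then works for the intersection, and `gⁿ ≠ 1` as `g` has infinite order.
-/

lemma rank_ratTensor_prod_int (M : Type*) [AddCommGroup M] :
    Module.rank ℚ (ℚ ⊗[ℤ] (M × ℤ)) = Module.rank ℚ (ℚ ⊗[ℤ] M) + 1 := by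
  rw [(TensorProduct.prodRight ℤ ℚ ℚ M ℤ).rank_eq, rank_prod,
    (TensorProduct.AlgebraTensorModule.rid ℤ ℚ ℚ).rank_eq, Module.rank_self]
  simp

section
variable {G : Type*} [Group G]
open Subgroup

lemma subgroupRank_eq_rank_additive (H : Subgroup G) [IsMulCommutative H] :
    subgroupRank H = Module.rank ℚ (ℚ ⊗[ℤ] Additive H) :=
  (Abelianization.equivOfComm.toAdditive.toIntLinearEquiv.baseChange ℤ ℚ _ _).symm.rank_eq

lemma subgroupRank_lt_aleph0 (H : Subgroup G) [IsMulCommutative H] (hfg : H.FG) :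
    subgroupRank H < Cardinal.aleph0 := by
  have : Group.FG H := (Group.fg_iff_subgroup_fg H).mpr hfg
  rw [subgroupRank_eq_rank_additive]
  exact Module.rank_lt_aleph0 ℚ _

lemma subgroupRank_eq_add_one_of_mulEquiv {H K : Subgroup G} [IsMulCommutative H]
    [IsMulCommutative K] (e : H × Multiplicative ℤ ≃* K) :
    subgroupRank K = subgroupRank H + 1 := by
  let e' : Additive H × ℤ ≃+ Additive K :=
    (AddEquiv.prodCongr (AddEquiv.refl _) (AddEquiv.additiveMultiplicative ℤ)).symm.trans
      ((AddEquiv.prodAdditive _ _).symm.trans (MulEquiv.toAdditive e))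
  rw [subgroupRank_eq_rank_additive, subgroupRank_eq_rank_additive,
    ← (e'.toIntLinearEquiv.baseChange ℤ ℚ _ _).rank_eq, rank_ratTensor_prod_int]

lemma subgroupRank_sup_zpowers {H : Subgroup G} [IsMulCommutative H] {g : G}
    (hg : g ∈ center G) (hord : ¬IsOfFinOrder g) (hdisj : Disjoint H (zpowers g)) :
    IsMulCommutative ↥(H ⊔ zpowers g) ∧
      subgroupRank (H ⊔ zpowers g) = subgroupRank H + 1 := by
  let φ := H.subtype.noncommCoprod (zpowersHom G g) fun a n =>
    mem_center_iff.mp (zpow_mem hg n.toAdd) a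
  have hφ : Function.Injective φ := (MonoidHom.noncommCoprod_injective _ _ _).mpr
    ⟨H.subtype_injective, injective_zpow_iff_not_isOfFinOrder.mpr hord,
      by rwa [range_subtype, range_zpowersHom]⟩
  have hrange : φ.range = H ⊔ zpowers g :=
    (MonoidHom.noncommCoprod_range _ _ _).trans (by rw [range_subtype, range_zpowersHom])
  rw [← hrange]
  exact ⟨inferInstance, subgroupRank_eq_add_one_of_mulEquiv (MonoidHom.ofInjective hφ)⟩

lemma Subgroup.exists_pow_mem_of_not_disjoint_zpowers {H : Subgroup G} {g : G}
    (h : ¬Disjoint H (zpowers g)) : ∃ n : ℕ, 1 ≤ n ∧ g ^ n ∈ H := by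
  simp only [disjoint_def, not_forall] at h
  obtain ⟨-, hxH, ⟨z, rfl⟩, hx⟩ := h
  obtain ⟨n, rfl | rfl⟩ := Int.eq_nat_or_neg z
  all_goals
    have hn : n ≠ 0 := by rintro rfl; simp at hx
    refine ⟨n, Nat.one_le_iff_ne_zero.mpr hn, ?_⟩
    simpa using hxH

lemma Subgroup.exists_pow_mem_iInf {ι : Type*} [Finite ι] {A : ι → Subgroup G} {g : G}
    (h : ∀ i, ∃ n : ℕ, 1 ≤ n ∧ g ^ n ∈ A i) :
    ∃ n : ℕ, 1 ≤ n ∧ g ^ n ∈ ⨅ i, A i := by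
  have := Fintype.ofFinite ι
  choose m hm hmem using h
  refine ⟨∏ i, m i, Finset.one_le_prod' fun i _ => hm i, mem_iInf.mpr fun i => ?_⟩
  obtain ⟨c, hc⟩ := Finset.dvd_prod_of_mem m (Finset.mem_univ i)
  rw [hc, pow_mul]
  exact pow_mem (hmem i) c

lemma IsHighestAbelian.exists_pow_mem {H : Subgroup G} (hH : IsHighestAbelian H)
    (hfg : H.FG) {g : G} (hg : g ∈ center G) (hord : ¬IsOfFinOrder g) :
    ∃ n : ℕ, 1 ≤ n ∧ g ^ n ∈ H := by
  have := hH.1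
  refine exists_pow_mem_of_not_disjoint_zpowers fun hdisj => ?_
  obtain ⟨hcomm, hrank⟩ := subgroupRank_sup_zpowers hg hord hdisj
  refine hH.2 H _ le_rfl (by simp [relIndex_self]) hcomm le_sup_left ?_
  rw [hrank, ← Cardinal.succ_eq_of_lt_aleph0 (subgroupRank_lt_aleph0 H hfg)]
  exact Order.lt_succ _

end

/-- If `g` is a central element of infinite order and `A₁, …, A_k` are finitely many
finitely generated highest abelian subgroups, then some power `gⁿ` with `n ≥ 1` lies in
`A₁ ∩ … ∩ A_k`; in particular this intersection is nontrivial. -/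
theorem exists_pow_mem_iInf_of_isHighestAbelian {G : Type*} [Group G] (g : G)
    (hg : g ∈ Subgroup.center G) (hord : ¬ IsOfFinOrder g)
    {k : ℕ} (A : Fin k → Subgroup G) (hA : ∀ i, IsHighestAbelian (A i))
    (hfg : ∀ i, (A i).FG) :
    (∃ n : ℕ, 1 ≤ n ∧ g ^ n ∈ ⨅ i, A i) ∧ (⨅ i, A i) ≠ ⊥ := by
  obtain ⟨n, hn, hmem⟩ :=
    Subgroup.exists_pow_mem_iInf fun i => (hA i).exists_pow_mem (hfg i) hg hord
  refine ⟨⟨n, hn, hmem⟩, fun hbot => hord ?_⟩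
  rw [hbot, Subgroup.mem_bot] at hmem
  exact isOfFinOrder_iff_pow_eq_one.mpr ⟨n, hn, hmem⟩
end

section
/- In the group G, the subgroup generated by the images x̄ and ā is free abelian of rank 2, i.e. isomorphic to ℤ × ℤ. -/
/-!
The generators `x̄` and `ā` commute, so `(m, n) ↦ x̄ ^ m * ā ^ n` is a homomorphism from `ℤ × ℤ`
onto the subgroup they generate. It is injective because two homomorphisms out of `G` separate
the exponents: the exponent sum of `x` kills `a` and reads off `m`, while a representation
`G → GL₃(ℤ)` kills `x` and sends `a` to a nontrivial unipotent matrix, which has infinite order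
and so reads off `n`.
-/

/-- The six generators `x, y, a, b, s, t` of the presentation. -/
inductive Gen : Type
  | x | y | a | b | s | t
  deriving DecidableEq

namespace GapGroup

open FreeGroup
open scoped commutatorElement

/-- The relations `[x,a] = [x,b] = [y,a] = [y,b] = 1`, `s a s⁻¹ = [a,b]`,
`t b t⁻¹ = [a,b]`, written as words that must die in the quotient
(here `⁅u,v⁆ = u v u⁻¹ v⁻¹`). -/
def rels : Set (FreeGroup Gen) :=
  {⁅of Gen.x, of Gen.a⁆, ⁅of Gen.x, of Gen.b⁆, ⁅of Gen.y, of Gen.a⁆, ⁅of Gen.y, of Gen.b⁆,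
    of Gen.s * of Gen.a * (of Gen.s)⁻¹ * ⁅of Gen.a, of Gen.b⁆⁻¹,
    of Gen.t * of Gen.b * (of Gen.t)⁻¹ * ⁅of Gen.a, of Gen.b⁆⁻¹}

/-- The group `G = ⟨x, y, a, b, s, t ∣ [x,a] = [x,b] = [y,a] = [y,b] = 1,
s a s⁻¹ = [a,b] = t b t⁻¹⟩`. -/
abbrev G : Type := PresentedGroup rels

/-- The image `x̄` of the generator `x` in `G`. -/
def xbar : G := PresentedGroup.of Gen.x
/-- The image `ȳ` of the generator `y` in `G`. -/
def ybar : G := PresentedGroup.of Gen.y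
/-- The image `ā` of the generator `a` in `G`. -/
def abar : G := PresentedGroup.of Gen.a
/-- The image `b̄` of the generator `b` in `G`. -/
def bbar : G := PresentedGroup.of Gen.b

end GapGroup

section CommutingPair

variable {G : Type*} [Group G] {g h : G}

def Commute.zpowersCoprod (hgh : Commute g h) : Multiplicative ℤ × Multiplicative ℤ →* G :=
  (zpowersHom G g).noncommCoprod (zpowersHom G h) fun m n => by
    simpa only [zpowersHom_apply] using hgh.zpow_zpow m.toAdd n.toAdd

theorem Commute.range_zpowersCoprod (hgh : Commute g h) :
    hgh.zpowersCoprod.range = Subgroup.closure {g, h} := by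
  rw [Commute.zpowersCoprod, MonoidHom.noncommCoprod_range, Subgroup.range_zpowersHom,
    Subgroup.range_zpowersHom, Subgroup.zpowers_eq_closure, Subgroup.zpowers_eq_closure,
    ← Subgroup.closure_union, Set.singleton_union]

theorem Commute.zpowersCoprod_injective {K : Type*} [Group K] (hgh : Commute g h)
    (f : G →* Multiplicative ℤ) (k : G →* K) (hfg : f g = Multiplicative.ofAdd 1) (hfh : f h = 1)
    (hkg : k g = 1) (hkh : ¬IsOfFinOrder (k h)) : Function.Injective hgh.zpowersCoprod := by
  rw [injective_iff_map_eq_one]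
  rintro ⟨m, n⟩ hmn
  replace hmn : g ^ m.toAdd * h ^ n.toAdd = 1 := hmn
  have hm : m = 1 := by simpa [hfg, hfh, ← ofAdd_zsmul] using congrArg f hmn
  have hn : n = 1 := by
    have hkn : k h ^ n.toAdd = k h ^ (0 : ℤ) := by simpa [hkg] using congrArg k hmn
    exact injective_zpow_iff_not_isOfFinOrder.mpr hkh hkn
  rw [hm, hn, Prod.mk_one_one]

theorem Commute.nonempty_closure_pair_mulEquiv {K : Type*} [Group K] (hgh : Commute g h)
    (f : G →* Multiplicative ℤ) (k : G →* K) (hfg : f g = Multiplicative.ofAdd 1) (hfh : f h = 1)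
    (hkg : k g = 1) (hkh : ¬IsOfFinOrder (k h)) :
    Nonempty (Subgroup.closure {g, h} ≃* Multiplicative (ℤ × ℤ)) :=
  ⟨(MulEquiv.subgroupCongr hgh.range_zpowersCoprod.symm).trans <|
    (MonoidHom.ofInjective (hgh.zpowersCoprod_injective f k hfg hfh hkg hkh)).symm.trans
      (MulEquiv.prodMultiplicative ℤ ℤ).symm⟩

end CommutingPair

namespace GapGroup

open scoped commutatorElement Matrix Matrix.GeneralLinearGroup

theorem commute_xbar_abar : Commute xbar abar := by
  rw [← commutatorElement_eq_one_iff_commute]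
  exact (map_commutatorElement _ _ _).symm.trans (PresentedGroup.one_of_mem (by simp [rels]))

def xExponentSum : G →* Multiplicative ℤ :=
  PresentedGroup.toGroup (f := fun u => if u = Gen.x then Multiplicative.ofAdd 1 else 1) <| by
    simp [rels, commutatorElement_def]

def matA : GL (Fin 3) ℤ := ⟨!![1, 1, 0; 0, 1, 1; 0, 0, 1], !![1, -1, 1; 0, 1, -1; 0, 0, 1],
  by simp [← Matrix.one_fin_three], by simp [← Matrix.one_fin_three]⟩

def matB : GL (Fin 3) ℤ := ⟨!![-1, -2, 2; 1, 2, -1; 0, 1, 2], !![5, 6, -2; -2, -2, 1; 1, 1, 0],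
  by simp [← Matrix.one_fin_three], by simp [← Matrix.one_fin_three]⟩

def matS : GL (Fin 3) ℤ := ⟨!![0, 1, 0; 0, 0, 1; -1, -1, 0], !![-1, 0, -1; 1, 0, 0; 0, 1, 0],
  by simp [← Matrix.one_fin_three], by simp [← Matrix.one_fin_three]⟩

def matT : GL (Fin 3) ℤ := ⟨!![0, 1, 1; 1, 2, 0; 0, -1, -2], !![-4, 1, -2; 2, 0, 1; -1, 0, -1],
  by simp [← Matrix.one_fin_three], by simp [← Matrix.one_fin_three]⟩

theorem matS_conj_matA : matS * matA * matS⁻¹ = ⁅matA, matB⁆ := by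
  ext : 1
  simp [matA, matB, matS, commutatorElement_def]

theorem matT_conj_matB : matT * matB * matT⁻¹ = ⁅matA, matB⁆ := by
  ext : 1
  simp [matA, matB, matT, commutatorElement_def]

def matGen : Gen → GL (Fin 3) ℤ
  | .x | .y => 1
  | .a => matA
  | .b => matB
  | .s => matS
  | .t => matT

def matRep : G →* GL (Fin 3) ℤ :=
  PresentedGroup.toGroup (f := matGen) <| by
    simp [rels, commutatorElement_def, matGen, matS_conj_matA, matT_conj_matB]

theorem matRep_abar : matRep abar = matA :=
  PresentedGroup.toGroup.of _

theorem matA_pow_mulVec (n : ℕ) :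
    ((matA ^ n : GL (Fin 3) ℤ) : Matrix (Fin 3) (Fin 3) ℤ) *ᵥ ![0, 1, 0] = ![(n : ℤ), 1, 0] := by
  induction n with
  | zero => simp
  | succ n ih =>
    rw [pow_succ', Units.val_mul, ← Matrix.mulVec_mulVec, ih]
    ext i
    fin_cases i <;> simp [matA, Matrix.mulVec, dotProduct, Fin.sum_univ_three]

theorem not_isOfFinOrder_matA : ¬IsOfFinOrder matA := by
  rw [isOfFinOrder_iff_pow_eq_one]
  rintro ⟨n, hn, hpow⟩
  have hn0 : (n : ℤ) = 0 := by simpa [hpow, eq_comm] using congrFun (matA_pow_mulVec n) 0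
  omega

end GapGroup

open GapGroup in
/-- In `G`, the subgroup generated by `x̄` and `ā` is free abelian of rank 2,
i.e. isomorphic to `ℤ × ℤ`. -/
theorem closure_xbar_abar_iso_zxz :
    Nonempty (↥(Subgroup.closure {xbar, abar}) ≃* Multiplicative (ℤ × ℤ)) :=
  commute_xbar_abar.nonempty_closure_pair_mulEquiv xExponentSum matRep
    (PresentedGroup.toGroup.of _) (PresentedGroup.toGroup.of _) (PresentedGroup.toGroup.of _)
    (matRep_abar ▸ not_isOfFinOrder_matA)
end

section
/- In the group G, the subgroup generated by the images ā and b̄ is a free group of rank 2 (with ā, b̄ as a free basis). -/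
/-!
Sending `x` and `y` to `1`, it suffices to embed the free group `F(a, b)` into a group in which
`a` and `b` are both conjugate to `⁅a, b⁆`. Free groups are torsion-free, so `a`, `b` and
`⁅a, b⁆` generate infinite cyclic subgroups, and two successive HNN extensions, into each of
which the previous group embeds, adjoin the conjugating elements `s` and `t`.
-/

universe u

open scoped commutatorElement

section HNN

variable {G : Type u} [Group G]

-- The HNN extension of `G` identifying the two copies `f.range` and `g.range` of `K`.
theorem exists_injective_hom_conj_eq {K : Type*} [Group K] {f g : K →* G}
    (hf : Function.Injective f) (hg : Function.Injective g) :
    ∃ (H : Type u) (_ : Group H) (ι : G →* H) (t : H),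
      Function.Injective ι ∧ ∀ k, t * ι (f k) * t⁻¹ = ι (g k) := by
  let φ : f.range ≃* g.range := (MonoidHom.ofInjective hf).symm.trans (MonoidHom.ofInjective hg)
  refine ⟨HNNExtension G f.range g.range φ, inferInstance, HNNExtension.of, HNNExtension.t,
    HNNExtension.of_injective φ, fun k => ?_⟩
  have hφ : φ ⟨f k, k, rfl⟩ = ⟨g k, k, rfl⟩ := by
    rw [MulEquiv.trans_apply,
      (MulEquiv.symm_apply_eq _).mpr (Subtype.ext (MonoidHom.ofInjective_apply hf).symm)]
    exact Subtype.ext (MonoidHom.ofInjective_apply hg)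
  simpa [hφ] using (HNNExtension.equiv_eq_conj (φ := φ) ⟨f k, k, rfl⟩).symm

theorem zpowersHom_injective {x : G} (hx : ¬IsOfFinOrder x) :
    Function.Injective (zpowersHom G x) :=
  (injective_zpow_iff_not_isOfFinOrder.mpr hx).comp Multiplicative.toAdd.injective

theorem exists_injective_hom_conj_eq_of_not_isOfFinOrder {x y : G}
    (hx : ¬IsOfFinOrder x) (hy : ¬IsOfFinOrder y) :
    ∃ (H : Type u) (_ : Group H) (ι : G →* H) (t : H),
      Function.Injective ι ∧ t * ι x * t⁻¹ = ι y := by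
  obtain ⟨H, _, ι, t, hι, ht⟩ :=
    exists_injective_hom_conj_eq (zpowersHom_injective hx) (zpowersHom_injective hy)
  exact ⟨H, _, ι, t, hι, by simpa using ht (Multiplicative.ofAdd 1)⟩

end HNN

namespace GapGroup

open FreeGroup

theorem exists_injective_hom_conj_eq_commutator :
    ∃ (H : Type) (_ : Group H) (ι : FreeGroup (Fin 2) →* H) (s t : H),
      Function.Injective ι ∧ s * ι (of 0) * s⁻¹ = ⁅ι (of 0), ι (of 1)⁆ ∧
        t * ι (of 1) * t⁻¹ = ⁅ι (of 0), ι (of 1)⁆ := by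
  have hc : ¬IsOfFinOrder ⁅(of 0 : FreeGroup (Fin 2)), (of 1 : FreeGroup (Fin 2))⁆ :=
    not_isOfFinOrder_of_isMulTorsionFree (by decide)
  obtain ⟨H₁, _, ι₁, s, hι₁, hs⟩ := exists_injective_hom_conj_eq_of_not_isOfFinOrder
    (not_isOfFinOrder_of_isMulTorsionFree (of_ne_one 0)) hc
  obtain ⟨H₂, _, ι₂, t, hι₂, ht⟩ := exists_injective_hom_conj_eq_of_not_isOfFinOrder
    (hι₁.isOfFinOrder_iff.not.mpr (not_isOfFinOrder_of_isMulTorsionFree (of_ne_one 1)))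
    (hι₁.isOfFinOrder_iff.not.mpr hc)
  refine ⟨H₂, _, ι₂.comp ι₁, ι₂ s, t, hι₂.comp hι₁, ?_, ?_⟩
  · simpa [← map_commutatorElement] using congrArg ι₂ hs
  · simpa [← map_commutatorElement] using ht

section Lift

variable {H : Type*} [Group H] {a b s t : H}

def genImage (a b s t : H) : Gen → H
  | .x | .y => 1
  | .a => a
  | .b => b
  | .s => s
  | .t => t

theorem lift_genImage_eq_one_of_mem_rels (hs : s * a * s⁻¹ = ⁅a, b⁆)
    (ht : t * b * t⁻¹ = ⁅a, b⁆) : ∀ r ∈ rels, FreeGroup.lift (genImage a b s t) r = 1 := by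
  rintro r (rfl | rfl | rfl | rfl | rfl | rfl) <;>
    simp only [_root_.map_mul, _root_.map_inv, map_commutatorElement, FreeGroup.lift_apply_of,
      genImage, commutatorElement_one_left, hs, ht, mul_inv_cancel]

def lift (hs : s * a * s⁻¹ = ⁅a, b⁆) (ht : t * b * t⁻¹ = ⁅a, b⁆) : G →* H :=
  PresentedGroup.toGroup (lift_genImage_eq_one_of_mem_rels hs ht)

variable (hs : s * a * s⁻¹ = ⁅a, b⁆) (ht : t * b * t⁻¹ = ⁅a, b⁆)

@[simp] theorem lift_abar : lift hs ht abar = a := PresentedGroup.toGroup.of _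

@[simp] theorem lift_bbar : lift hs ht bbar = b := PresentedGroup.toGroup.of _

end Lift

end GapGroup

open GapGroup in
/-- In `G`, the subgroup generated by `ā` and `b̄` is free of rank 2, with `ā`, `b̄`
as a free basis: the homomorphism from the free group on two generators sending the
generators to `ā` and `b̄` is injective with range `⟨ā, b̄⟩`. -/
theorem closure_abar_bbar_free :
    Function.Injective (FreeGroup.lift (fun i : Fin 2 => if i = 0 then abar else bbar)) ∧
    (FreeGroup.lift (fun i : Fin 2 => if i = 0 then abar else bbar)).range =
      Subgroup.closure {abar, bbar} := by
  obtain ⟨H, _, ι, s, t, hι, hs, ht⟩ := exists_injective_hom_conj_eq_commutator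
  have hcomp :
      (lift hs ht).comp (FreeGroup.lift fun i : Fin 2 => if i = 0 then abar else bbar) = ι :=
    FreeGroup.ext_hom _ _ fun i => by fin_cases i <;> simp
  refine ⟨.of_comp (f := lift hs ht) ?_, ?_⟩
  · rwa [← MonoidHom.coe_comp, hcomp]
  · rw [FreeGroup.range_lift_eq_closure]
    congr
    ext
    simp [Fin.exists_fin_two, eq_comm]
end

section
/- In the group G, the subgroup generated by the images x̄, ȳ, ā, b̄ is isomorphic to the direct product F₂ × F₂ of two free groups of rank 2, via an isomorphism sending x̄, ȳ to a free basis of the first factor and ā, b̄ to a free basis of the second factor. -/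
open scoped commutatorElement

section RightRegular

variable {K : Type*} [Group K]

variable (K) in
def rightRegularPerm : K →* Equiv.Perm K where
  toFun g := Equiv.mulRight g⁻¹
  map_one' := by ext; simp
  map_mul' g h := by ext; simp [mul_assoc]

@[simp]
lemma rightRegularPerm_apply (g x : K) : rightRegularPerm K g x = x * g⁻¹ := rfl

lemma rightRegularPerm_injective : Function.Injective (rightRegularPerm K) := by
  intro g h hgh
  simpa using congr($hgh 1)

lemma conj_rightRegularPerm {S : Equiv.Perm K} {g h : K} (hS : ∀ x, S (x * g) = S x * h) :
    S * rightRegularPerm K g * S⁻¹ = rightRegularPerm K h := by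
  ext x
  obtain ⟨y, rfl⟩ := S.surjective x
  have hS' : S (y * g⁻¹) = S y * h⁻¹ := by
    rw [eq_mul_inv_iff_mul_eq, ← hS, inv_mul_cancel_right]
  simp [Equiv.Perm.mul_apply, hS']

lemma bijective_out_mul_zpow {g : K} (hg : ¬IsOfFinOrder g) :
    Function.Bijective fun p : (K ⧸ Subgroup.zpowers g) × ℤ => p.1.out * g ^ p.2 := by
  constructor
  · rintro ⟨q, n⟩ ⟨q', m⟩ h
    have hq : q = q' := by
      simpa [QuotientGroup.mk_mul_of_mem _ (Subgroup.zpow_mem_zpowers g _)] using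
        congr((QuotientGroup.mk $h : K ⧸ Subgroup.zpowers g))
    subst hq
    exact Prod.ext rfl (injective_zpow_iff_not_isOfFinOrder.mpr hg (mul_left_cancel h))
  · intro x
    obtain ⟨n, hn⟩ := Subgroup.mem_zpowers_iff.mp
      (QuotientGroup.eq.mp (QuotientGroup.out_eq' (QuotientGroup.mk x : K ⧸ Subgroup.zpowers g)))
    exact ⟨(QuotientGroup.mk x, n), by simp [hn]⟩

/-- `K ≃ (K ⧸ ⟨g⟩) × ℤ`, turning right multiplication by `g` into the shift on `ℤ`; same for `h`. -/
lemma exists_perm_mul_right_eq {g h : K} (hg : ¬IsOfFinOrder g) (hh : ¬IsOfFinOrder h)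
    (e : K ⧸ Subgroup.zpowers g ≃ K ⧸ Subgroup.zpowers h) :
    ∃ S : Equiv.Perm K, ∀ x, S (x * g) = S x * h := by
  let Eg := Equiv.ofBijective _ (bijective_out_mul_zpow hg)
  let Eh := Equiv.ofBijective _ (bijective_out_mul_zpow hh)
  refine ⟨Eg.symm.trans ((e.prodCongr (Equiv.refl ℤ)).trans Eh), fun x => ?_⟩
  obtain ⟨⟨q, n⟩, rfl⟩ := Eg.surjective x
  have hx : Eg (q, n) * g = Eg (q, n + 1) := by simp [Eg, zpow_add_one, mul_assoc]
  simp [hx, Eh, zpow_add_one, mul_assoc]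

lemma infinite_quotient_zpowers {M : Type*} [Group M] {g t : K} (f : K →* M) (hg : f g = 1)
    (ht : ¬IsOfFinOrder (f t)) : Infinite (K ⧸ Subgroup.zpowers g) := by
  refine Infinite.of_injective
    (fun n : ℤ => (QuotientGroup.mk (t ^ n) : K ⧸ Subgroup.zpowers g)) fun n m hnm => ?_
  obtain ⟨k, hk⟩ := Subgroup.mem_zpowers_iff.mp (QuotientGroup.eq.mp hnm)
  have hfk : f t ^ (m - n) = 1 := by
    simpa [hg, ← zpow_neg, ← zpow_add, neg_add_eq_sub] using congr(f $hk).symm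
  rw [zpow_sub, mul_inv_eq_one] at hfk
  exact injective_zpow_iff_not_isOfFinOrder.mpr ht hfk.symm

lemma exists_conj_rightRegularPerm [Countable K] {g h : K} (hg : ¬IsOfFinOrder g)
    (hh : ¬IsOfFinOrder h) (hgi : Infinite (K ⧸ Subgroup.zpowers g))
    (hhi : Infinite (K ⧸ Subgroup.zpowers h)) :
    ∃ S : Equiv.Perm K, S * rightRegularPerm K g * S⁻¹ = rightRegularPerm K h := by
  have := QuotientGroup.mk_surjective (s := Subgroup.zpowers g) |>.countable
  have := QuotientGroup.mk_surjective (s := Subgroup.zpowers h) |>.countable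
  obtain ⟨e⟩ := Cardinal.eq.mp <|
    (Cardinal.mk_eq_aleph0 (K ⧸ Subgroup.zpowers g)).trans
      (Cardinal.mk_eq_aleph0 (K ⧸ Subgroup.zpowers h)).symm
  obtain ⟨S, hS⟩ := exists_perm_mul_right_eq hg hh e
  exact ⟨S, conj_rightRegularPerm hS⟩

end RightRegular

namespace FreeGroup

variable {α : Type*}

lemma infinite_quotient_zpowers_of [DecidableEq α] {i j : α} (hij : i ≠ j) :
    Infinite (FreeGroup α ⧸ Subgroup.zpowers (of i)) :=
  infinite_quotient_zpowers (FreeGroup.lift (Pi.mulSingle j (Multiplicative.ofAdd (1 : ℤ))))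
    (t := of j) (by simp [hij]) (by simp [isOfFinOrder_iff_eq_one])

lemma infinite_quotient_zpowers_commutator (i : α) (u v : FreeGroup α) :
    Infinite (FreeGroup α ⧸ Subgroup.zpowers ⁅u, v⁆) :=
  infinite_quotient_zpowers (FreeGroup.lift fun _ => Multiplicative.ofAdd (1 : ℤ)) (t := of i)
    (by rw [map_commutatorElement, commutatorElement_eq_one_iff_commute]; exact Commute.all _ _)
    (by simp [isOfFinOrder_iff_eq_one])

lemma exists_conj_rightRegularPerm_of [Countable α] [DecidableEq α] {i j : α} (hij : i ≠ j)
    {u v : FreeGroup α} (huv : ⁅u, v⁆ ≠ 1) :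
    ∃ S : Equiv.Perm (FreeGroup α),
      S * rightRegularPerm _ (of i) * S⁻¹ = rightRegularPerm _ ⁅u, v⁆ :=
  exists_conj_rightRegularPerm ((isOfFinOrder_iff_eq_one _).not.mpr (of_ne_one i))
    ((isOfFinOrder_iff_eq_one _).not.mpr huv) (infinite_quotient_zpowers_of hij)
    (infinite_quotient_zpowers_commutator i u v)

lemma commute_lift_lift {M : Type*} [Group M] {β : Type*} {f : α → M} {g : β → M}
    (h : ∀ i j, Commute (f i) (g j)) (w : FreeGroup α) (v : FreeGroup β) :
    Commute (lift f w) (lift g v) := by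
  have hle : (lift g).range ≤ Subgroup.centralizer (lift f).range := by
    rw [range_lift_eq_closure, range_lift_eq_closure, Subgroup.centralizer_closure,
      Subgroup.closure_le]
    rintro _ ⟨j, rfl⟩ _ ⟨i, rfl⟩
    exact (h i j).eq
  exact hle ⟨v, rfl⟩ _ ⟨w, rfl⟩

end FreeGroup

namespace GapGroup

open FreeGroup (of)

local notation "F₂" => FreeGroup (Fin 2)
local notation "ρ" => rightRegularPerm F₂

lemma lift_eq_one_of_mem_rels {M : Type*} [Group M] {f : Gen → M}
    (hxa : Commute (f .x) (f .a)) (hxb : Commute (f .x) (f .b))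
    (hya : Commute (f .y) (f .a)) (hyb : Commute (f .y) (f .b))
    (hs : f .s * f .a * (f .s)⁻¹ = ⁅f .a, f .b⁆)
    (ht : f .t * f .b * (f .t)⁻¹ = ⁅f .a, f .b⁆) :
    ∀ r ∈ rels, FreeGroup.lift f r = 1 := by
  simp only [rels, Set.mem_insert_iff, Set.mem_singleton_iff, forall_eq_or_imp, forall_eq]
  simp [commutatorElement_eq_one_iff_commute, hxa, hxb, hya, hyb, hs, ht, -commutatorElement_inv]

lemma commute_of_commutator_mem_rels {u v : Gen} (h : ⁅of u, of v⁆ ∈ rels) :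
    Commute (PresentedGroup.of u : G) (PresentedGroup.of v) := by
  rw [← commutatorElement_eq_one_iff_commute]
  exact (map_commutatorElement (PresentedGroup.mk rels) _ _).symm.trans
    (PresentedGroup.one_of_mem h)

def xyHom : F₂ →* G := FreeGroup.lift ![xbar, ybar]

def abHom : F₂ →* G := FreeGroup.lift ![abar, bbar]

lemma commute_xyHom_abHom (w v : F₂) : Commute (xyHom w) (abHom v) := by
  refine FreeGroup.commute_lift_lift (fun i j => ?_) w v
  fin_cases i <;> fin_cases j <;> exact commute_of_commutator_mem_rels (by simp [rels])

def xyabHom : F₂ × F₂ →* G :=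
  xyHom.noncommCoprod abHom commute_xyHom_abHom

lemma xyabHom_apply (w v : F₂) : xyabHom (w, v) = xyHom w * abHom v := rfl

lemma range_xyabHom : xyabHom.range = Subgroup.closure {xbar, ybar, abar, bbar} := by
  rw [xyabHom, MonoidHom.noncommCoprod_range, xyHom, abHom, FreeGroup.range_lift_eq_closure,
    FreeGroup.range_lift_eq_closure, ← Subgroup.closure_union]
  congr 1
  ext
  simp only [Set.mem_union, Set.mem_range, Fin.exists_fin_two, Matrix.cons_val_zero,
    Matrix.cons_val_one, Set.mem_insert_iff, Set.mem_singleton_iff]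
  tauto

section PermRepr

variable {S T : Equiv.Perm F₂} (hS : S * ρ (of 0) * S⁻¹ = ρ ⁅(of 0 : F₂), of 1⁆)
  (hT : T * ρ (of 1) * T⁻¹ = ρ ⁅(of 0 : F₂), of 1⁆)

def permRepr : G →* F₂ × Equiv.Perm F₂ :=
  PresentedGroup.toGroup (f := fun
    | .x => (of 0, 1) | .y => (of 1, 1)
    | .a => (1, ρ (of 0)) | .b => (1, ρ (of 1))
    | .s => (1, S) | .t => (1, T))
    (lift_eq_one_of_mem_rels (MonoidHom.commute_inl_inr _ _) (MonoidHom.commute_inl_inr _ _)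
      (MonoidHom.commute_inl_inr _ _) (MonoidHom.commute_inl_inr _ _)
      (Prod.ext (by simp [commutatorElement_def])
        (by simpa [map_commutatorElement, commutatorElement_def] using hS))
      (Prod.ext (by simp [commutatorElement_def])
        (by simpa [map_commutatorElement, commutatorElement_def] using hT)))

lemma permRepr_xyabHom (p : F₂ × F₂) :
    permRepr hS hT (xyabHom p) = (p.1, ρ p.2) := by
  have hxy : (permRepr hS hT).comp xyHom = MonoidHom.inl _ _ := by
    refine FreeGroup.ext_hom _ _ fun i => ?_
    fin_cases i <;> rfl
  have hab : (permRepr hS hT).comp abHom = (MonoidHom.inr _ _).comp ρ := by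
    refine FreeGroup.ext_hom _ _ fun i => ?_
    fin_cases i <;> rfl
  obtain ⟨w, v⟩ := p
  rw [xyabHom_apply, map_mul, ← MonoidHom.comp_apply, hxy, ← MonoidHom.comp_apply, hab]
  simp

end PermRepr

lemma injective_xyabHom : Function.Injective xyabHom := by
  obtain ⟨S, hS⟩ := FreeGroup.exists_conj_rightRegularPerm_of (zero_ne_one (α := Fin 2))
    (u := of 0) (v := of 1) (by decide)
  obtain ⟨T, hT⟩ := FreeGroup.exists_conj_rightRegularPerm_of (one_ne_zero (α := Fin 2))
    (u := of 0) (v := of 1) (by decide)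
  refine Function.Injective.of_comp (f := permRepr hS hT) ?_
  intro p q hpq
  simp only [Function.comp_apply, permRepr_xyabHom] at hpq
  exact Function.injective_id.prodMap rightRegularPerm_injective hpq

end GapGroup

open GapGroup in
/-- In `G`, the subgroup generated by `x̄, ȳ, ā, b̄` is isomorphic to `F₂ × F₂`, via an
isomorphism (realised as an injective homomorphism `φ` from `F₂ × F₂` onto this subgroup)
sending the free basis of the first factor to `x̄, ȳ` and of the second factor to `ā, b̄`. -/
theorem closure_xyab_iso_f2_prod_f2 :
    ∃ φ : FreeGroup (Fin 2) × FreeGroup (Fin 2) →* G,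
      Function.Injective φ ∧
      φ.range = Subgroup.closure {xbar, ybar, abar, bbar} ∧
      φ (FreeGroup.of 0, 1) = xbar ∧ φ (FreeGroup.of 1, 1) = ybar ∧
      φ (1, FreeGroup.of 0) = abar ∧ φ (1, FreeGroup.of 1) = bbar := by
  refine ⟨xyabHom, injective_xyabHom, range_xyabHom, ?_, ?_, ?_, ?_⟩ <;>
    simp [xyabHom_apply, xyHom, abHom]
end
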